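/- For every d ∈ ℂ, the linear map φ_d of the centerless twisted Heisenberg–Virasoro algebra 𝒲 defined on basis elements by φ_d(L_n) = L_n + d·I_n and φ_d(I_n) = I_n for all n ∈ ℤ is a Lie algebra endomorphism of 𝒲; consequently, the twisted bracket [x,y]_{φ_d} := φ_d([x,y]) together with the twist φ_d defines a multiplicative Hom-Lie algebra structure on 𝒲, which is nontrivial when d ≠ 0. -/

import Mathlib

/-- Basis of the centerless twisted Heisenberg–Virasoro algebra. -/
inductive WBasis
  | L : ℤ → WBasis
  | I : ℤ → WBasis

/-- The underlying ℂ-vector space with basis `{L n, I n : n ∈ ℤ}`. -/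
abbrev W : Type := WBasis →₀ ℂ

noncomputable def Ln (n : ℤ) : W := Finsupp.single (WBasis.L n) 1
noncomputable def In (n : ℤ) : W := Finsupp.single (WBasis.I n) 1

/-- Bracket on basis elements:
`[L n, L m] = (n-m) L (n+m)`, `[L n, I m] = -m I (n+m)`, `[I n, I m] = 0`. -/
noncomputable def brkt : WBasis → WBasis → W
  | WBasis.L n, WBasis.L m => ((n : ℂ) - m) • Ln (n + m)
  | WBasis.L n, WBasis.I m => (-(m : ℂ)) • In (n + m)
  | WBasis.I n, WBasis.L m => (n : ℂ) • In (m + n)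
  | WBasis.I _, WBasis.I _ => 0

/-- The bilinear extension of `brkt` to all of `W`. -/
noncomputable def br : W →ₗ[ℂ] W →ₗ[ℂ] W :=
  Finsupp.lift (W →ₗ[ℂ] W) ℂ WBasis fun i =>
    Finsupp.lift W ℂ WBasis fun j => brkt i j

/-- The linear map determined on basis elements by
`φ_d(L n) = L n + d • I n` and `φ_d(I n) = I n`. -/
noncomputable def φd (d : ℂ) : W →ₗ[ℂ] W :=
  Finsupp.lift W ℂ WBasis fun i =>
    match i with
    | WBasis.L n => Ln n + d • In n
    | WBasis.I n => In n

/-!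
Twisting a Lie bracket by an endomorphism `α` gives the multiplicative Hom-Lie algebra
`(L, α ∘ [·,·], α)`: every instance of the Hom-Jacobi identity is `α` applied to the Jacobi
identity at `α x, α y, α z`. So it suffices that `φ_d` respects the bracket of `𝒲`, which on
basis elements comes down to
`[L_n + d I_n, L_m + d I_m] = (n - m) L_{n+m} + d (n - m) I_{n+m} = (n - m) φ_d (L_{n+m})`.
-/

section BilinearBracket

variable {R M : Type*} [CommSemiring R] [AddCommGroup M] [Module R M] {B : M →ₗ[R] M →ₗ[R] M}

theorem jacobi_of_antisymm_of_leibniz (antisymm : ∀ x y, B x y = -B y x)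
    (leibniz : ∀ x y z, B x (B y z) = B (B x y) z + B y (B x z)) (x y z : M) :
    B x (B y z) + B y (B z x) + B z (B x y) = 0 := by
  rw [leibniz x y z, antisymm z (B x y), antisymm z x, map_neg]
  abel

theorem twist_jacobi {φ : M →ₗ[R] M}
    (jacobi : ∀ x y z, B x (B y z) + B y (B z x) + B z (B x y) = 0)
    (map_bracket : ∀ x y, φ (B x y) = B (φ x) (φ y)) (x y z : M) :
    φ (B (φ x) (φ (B y z))) + φ (B (φ y) (φ (B z x))) + φ (B (φ z) (φ (B x y))) = 0 := by
  simp only [map_bracket]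
  exact jacobi _ _ _

end BilinearBracket

lemma br_single (i j : WBasis) : br (Finsupp.single i 1) (Finsupp.single j 1) = brkt i j := by
  simp [br]

@[simp] lemma φd_Ln (d : ℂ) (n : ℤ) : φd d (Ln n) = Ln n + d • In n := by
  simp [φd, Ln]

@[simp] lemma φd_In (d : ℂ) (n : ℤ) : φd d (In n) = In n := by
  simp [φd, In]

@[simp] lemma single_L_one (n : ℤ) : Finsupp.single (WBasis.L n) (1 : ℂ) = Ln n := rfl

@[simp] lemma single_I_one (n : ℤ) : Finsupp.single (WBasis.I n) (1 : ℂ) = In n := rfl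

@[simp] lemma br_Ln_Ln (n m : ℤ) : br (Ln n) (Ln m) = ((n : ℂ) - m) • Ln (n + m) :=
  br_single (.L n) (.L m)

@[simp] lemma br_Ln_In (n m : ℤ) : br (Ln n) (In m) = (-(m : ℂ)) • In (n + m) :=
  br_single (.L n) (.I m)

@[simp] lemma br_In_Ln (n m : ℤ) : br (In n) (Ln m) = (n : ℂ) • In (m + n) :=
  br_single (.I n) (.L m)

@[simp] lemma br_In_In (n m : ℤ) : br (In n) (In m) = 0 :=
  br_single (.I n) (.I m)

lemma br_antisymm (x y : W) : br x y = -br y x := by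
  have h : br.flip + br = 0 := by
    ext (i | i) (j | j) : 4 <;> simp [add_comm, ← add_smul]
  exact eq_neg_of_add_eq_zero_left (LinearMap.congr_fun₂ h y x)

lemma br_leibniz (x y z : W) : br x (br y z) = br (br x y) z + br y (br x z) := by
  -- `x ↦ y ↦ ad [x, y] + ad y ∘ ad x` versus `x ↦ y ↦ ad x ∘ ad y`, so that `ext` reaches basis vectors
  have h : br.compr₂ br + ((LinearMap.mul ℂ (Module.End ℂ W)).compl₁₂ br br).flip =
      (LinearMap.mul ℂ (Module.End ℂ W)).compl₁₂ br br := by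
    ext (i | i) (j | j) (k | k) : 6 <;> simp [add_comm, add_left_comm] <;> module
  exact (LinearMap.congr_fun (LinearMap.congr_fun₂ h x y) z).symm

lemma φd_br (d : ℂ) (x y : W) : φd d (br x y) = br (φd d x) (φd d y) := by
  have h : br.compr₂ (φd d) = br.compl₁₂ (φd d) (φd d) := by
    ext (i | i) (j | j) : 4 <;> simp [add_comm]
    module
  exact LinearMap.congr_fun₂ h x y

lemma φd_ne_id {d : ℂ} (hd : d ≠ 0) : φd d ≠ LinearMap.id := by
  intro h
  have h0 : d • In 0 = 0 := by simpa using LinearMap.congr_fun h (Ln 0)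
  exact hd ((smul_eq_zero.mp h0).resolve_right (Finsupp.single_ne_zero.mpr one_ne_zero))

/-- `φ_d` is a Lie algebra endomorphism of the centerless twisted
Heisenberg–Virasoro algebra; consequently the twisted bracket
`[x,y]_{φ_d} := φ_d [x,y]` together with `φ_d` is a multiplicative Hom-Lie
algebra structure (skew-symmetry, Hom-Jacobi identity, multiplicativity),
which is nontrivial when `d ≠ 0`. -/
theorem φd_hom_lie_structure (d : ℂ) :
    (∀ x y : W, φd d (br x y) = br (φd d x) (φd d y)) ∧
    (∀ x y : W, φd d (br x y) = -φd d (br y x)) ∧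
    (∀ x y z : W,
      φd d (br (φd d x) (φd d (br y z))) + φd d (br (φd d y) (φd d (br z x))) +
        φd d (br (φd d z) (φd d (br x y))) = 0) ∧
    (∀ x y : W, φd d (φd d (br x y)) = φd d (br (φd d x) (φd d y))) ∧
    (d ≠ 0 → φd d ≠ LinearMap.id) := by
  have br_jacobi := jacobi_of_antisymm_of_leibniz br_antisymm br_leibniz
  refine ⟨φd_br d, fun x y => ?_, twist_jacobi br_jacobi (φd_br d), fun x y => ?_, φd_ne_id⟩
  · rw [br_antisymm x y, map_neg]
  · rw [φd_br d x y]
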